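/- arXiv:1409.5238 — 3 statements merged into one kernel-verified Lean document; each statement's English description precedes it below -/
import Mathlib

section
/- Let s, h, C > 0 and suppose a sequence (c_α)_{α∈ℕ^d} of complex numbers satisfies (2|α|+d)^N |c_α| ≤ C h^N (N!)^{2s} for every integer N ≥ 0 and every α. Then |c_α| ≤ 4^s C e^{-s|α|^{1/(2s)}/h^{1/(2s)}} for every α ∈ ℕ^d. -/
/-!
Put `r = 1/(2s)` and `K = ((2|α| + d)/h)^r`. Taking `r`-th powers turns the hypothesis into
`K^N |c_α|^r ≤ C^r N!`; dividing by `2^N N!` and summing over `N` gives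
`|c_α|^r e^{K/2} ≤ 2 C^r`, and raising this back to the power `2s` gives the claim, since
`|α| ≤ 2|α| + d`.
-/

open Real Nat

lemma le_two_mul_mul_exp_neg_half {a B K : ℝ} (hbound : ∀ N : ℕ, K ^ N * a ≤ B * N !) :
    a ≤ 2 * B * exp (-(K / 2)) := by
  have hterm : ∀ N : ℕ, a * ((K / 2) ^ N / N !) ≤ B * (1 / 2) ^ N := by
    intro N
    have hfact : (0 : ℝ) < N ! := mod_cast N.factorial_pos
    calc a * ((K / 2) ^ N / N !) = K ^ N * a / N ! * (1 / 2) ^ N := by ring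
      _ ≤ B * N ! / N ! * (1 / 2) ^ N := by gcongr ?_ / _ * _; exact hbound N
      _ = B * (1 / 2) ^ N := by field_simp
  have hsum : a * exp (K / 2) ≤ 2 * B :=
    calc a * exp (K / 2) = ∑' N : ℕ, a * ((K / 2) ^ N / N !) := by
          rw [tsum_mul_left, exp_eq_exp_ℝ, NormedSpace.exp_eq_tsum_div]
      _ ≤ ∑' N : ℕ, B * (1 / 2) ^ N :=
          ((summable_pow_div_factorial _).mul_left a).tsum_le_tsum hterm
            (summable_geometric_two.mul_left B)
      _ = 2 * B := by rw [tsum_mul_left, tsum_geometric_two, mul_comm]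
  rw [exp_neg, ← div_eq_mul_inv, le_div_iff₀ (exp_pos _)]
  exact hsum

theorem le_four_rpow_mul_exp_of_pow_mul_le_factorial_rpow {x L h C s : ℝ}
    (hs : 0 < s) (hh : 0 < h) (hx : 0 ≤ x) (hL : 0 ≤ L)
    (hbound : ∀ N : ℕ, L ^ N * x ≤ C * h ^ N * (N ! : ℝ) ^ (2 * s)) :
    x ≤ 4 ^ s * C * exp (-(s * L ^ (1 / (2 * s)) / h ^ (1 / (2 * s)))) := by
  set r : ℝ := 1 / (2 * s) with hr
  have hr_pos : 0 < r := by positivity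
  have hrs : r * (2 * s) = 1 := by rw [hr]; field_simp
  have hC : 0 ≤ C := hx.trans (by simpa using hbound 0)
  set K := L ^ r / h ^ r
  have hroot : ∀ N : ℕ, K ^ N * x ^ r ≤ C ^ r * N ! := by
    intro N
    have hN := rpow_le_rpow (by positivity) (hbound N) hr_pos.le
    rw [mul_rpow (by positivity) hx, mul_rpow (by positivity) (by positivity),
      mul_rpow hC (by positivity), ← rpow_pow_comm hL, ← rpow_pow_comm hh.le,
      ← rpow_mul (Nat.cast_nonneg _), mul_comm (2 * s), hrs, rpow_one] at hN
    have hhN : 0 < (h ^ r) ^ N := by positivity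
    rw [div_pow, div_mul_eq_mul_div, div_le_iff₀ hhN]
    linarith
  calc x = (x ^ r) ^ (2 * s) := by rw [← rpow_mul hx, hrs, rpow_one]
    _ ≤ (2 * C ^ r * exp (-(K / 2))) ^ (2 * s) :=
        rpow_le_rpow (by positivity) (le_two_mul_mul_exp_neg_half hroot) (by positivity)
    _ = 4 ^ s * C * exp (-(s * L ^ r / h ^ r)) := by
        have hexponent : -(K / 2) * (2 * s) = -(s * L ^ r / h ^ r) := by ring
        rw [mul_rpow (by positivity) (exp_pos _).le, mul_rpow zero_le_two (by positivity),
          ← rpow_mul hC, hrs, rpow_one, ← exp_mul, hexponent, rpow_mul zero_le_two]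
        norm_num

theorem stmt_3 (d : ℕ) (s h C : ℝ) (hs : 0 < s) (hh : 0 < h) (hC : 0 < C)
    (c : (Fin d → ℕ) → ℂ)
    (hcond : ∀ N : ℕ, ∀ α : Fin d → ℕ,
      (2 * (∑ i, (α i : ℝ)) + d) ^ N * ‖c α‖
        ≤ C * h ^ N * (Nat.factorial N : ℝ) ^ (2 * s)) :
    ∀ α : Fin d → ℕ,
      ‖c α‖
        ≤ (4 : ℝ) ^ s * C *
            Real.exp (-(s * (∑ i, (α i : ℝ)) ^ (1 / (2 * s)) / h ^ (1 / (2 * s)))) := by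
  intro α
  have ht : 0 ≤ ∑ i, (α i : ℝ) := by positivity
  refine (le_four_rpow_mul_exp_of_pow_mul_le_factorial_rpow hs hh (norm_nonneg _)
    (by positivity) (hcond · α)).trans ?_
  gcongr
  linarith [(d.cast_nonneg : (0 : ℝ) ≤ d)]
end

section
/- Let C, s, h > 0 and suppose (c_α)_{α∈ℕ^d} satisfies |c_α| ≤ C e^{-|α|^{1/(2s)}/h} for all α. Then there is a constant C_1 > 0 (depending only on C, s, h, d) such that for every integer N ≥ 0, (∑_{α∈ℕ^d} (2|α|+d)^{2N} |c_α|^2)^{1/2} ≤ C_1 (3(4sh)^{2s})^N (N!)^{2s}. -/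
/-!
Write `|α| = ∑ αᵢ` and `p = 1 / (2s)`. For `y ≥ 0`, the bound `qᴺ ≤ N! e^q` at `q = y^p / (4sh)`,
raised to the power `4s`, gives `y^(2N) ≤ ((4sh)^(4s))ᴺ (N!)^(4s) e^(y^p/h)`. Applied to
`y = max |α| d`, with `2|α| + d ≤ 3y` and `y^p ≤ |α|^p + d^p`, it bounds the weight `(2|α| + d)^(2N)`
by `((3 (4sh)^(2s))ᴺ (N!)^(2s))² e^(d^p/h) e^(|α|^p/h)`. Against `|c_α|² ≤ C² e^(-2|α|^p/h)` this
leaves the factor `e^(-|α|^p/h)`, which is summable because the same weight bound with `N = d`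
dominates `∏ (αᵢ + 1)²`.
-/

open Real Nat

lemma pow_le_factorial_mul_exp {q : ℝ} (hq : 0 ≤ q) (n : ℕ) : q ^ n ≤ n ! * exp q := by
  have := pow_div_factorial_le_exp q hq n
  rwa [div_le_iff₀ (by positivity), mul_comm] at this

lemma rpow_pow_le_factorial_rpow_mul_exp {t r h : ℝ} (ht : 0 ≤ t) (hr : 0 < r) (hh : 0 < h)
    (n : ℕ) : (t ^ r) ^ n ≤ ((r * h) ^ r) ^ n * (n ! : ℝ) ^ r * exp (t / h) := by
  set q := t / (r * h)
  have hq : 0 ≤ q := by positivity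
  have ht_eq : t = r * h * q := (mul_div_cancel₀ t (by positivity)).symm
  have hexp : exp q ^ r = exp (t / h) := by
    rw [← exp_mul]; congr 1; simp only [q]; field_simp
  calc (t ^ r) ^ n = ((r * h) ^ r) ^ n * (q ^ n) ^ r := by
        rw [ht_eq, mul_rpow (by positivity) hq, mul_pow, rpow_pow_comm hq]
    _ ≤ ((r * h) ^ r) ^ n * (n ! * exp q) ^ r := by
        gcongr; exact pow_le_factorial_mul_exp hq n
    _ = ((r * h) ^ r) ^ n * (n ! : ℝ) ^ r * exp (t / h) := by
        rw [mul_rpow (by positivity) (exp_pos q).le, hexp, mul_assoc]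

lemma max_rpow_le_rpow_add_rpow {x y : ℝ} (hx : 0 ≤ x) (hy : 0 ≤ y) (p : ℝ) :
    max x y ^ p ≤ x ^ p + y ^ p := by
  rcases le_total x y with hxy | hxy
  · rw [max_eq_right hxy]; linarith [rpow_nonneg hx p]
  · rw [max_eq_left hxy]; linarith [rpow_nonneg hy p]

lemma two_mul_add_pow_le {x d s h : ℝ} (hx : 0 ≤ x) (hd : 0 ≤ d) (hs : 0 < s) (hh : 0 < h)
    (N : ℕ) :
    (2 * x + d) ^ (2 * N) ≤ ((3 * (4 * s * h) ^ (2 * s)) ^ N * (N ! : ℝ) ^ (2 * s)) ^ 2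
      * exp (d ^ (1 / (2 * s)) / h) * exp (x ^ (1 / (2 * s)) / h) := by
  set y := max x d
  have hy : 0 ≤ y := le_max_of_le_left hx
  set t := y ^ (1 / (2 * s))
  have ht : t ^ (4 * s) = y ^ 2 := by
    rw [← rpow_mul hy, ← rpow_two]; congr 1; field_simp; norm_num
  have hexp : exp (t / h) ≤ exp (d ^ (1 / (2 * s)) / h) * exp (x ^ (1 / (2 * s)) / h) := by
    rw [← exp_add, ← add_div, add_comm]
    gcongr
    exact max_rpow_le_rpow_add_rpow hx hd _
  have hsq : (9 : ℝ) ^ N * (((4 * s * h) ^ (4 * s)) ^ N * (N ! : ℝ) ^ (4 * s))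
      = ((3 * (4 * s * h) ^ (2 * s)) ^ N * (N ! : ℝ) ^ (2 * s)) ^ 2 := by
    have h4 : ∀ z : ℝ, 0 ≤ z → z ^ (4 * s) = (z ^ (2 * s)) ^ 2 := fun z hz => by
      rw [← rpow_mul_natCast hz]; norm_num; ring_nf
    have h9 : (9 : ℝ) ^ N = (3 ^ N) ^ 2 := by rw [← pow_mul, mul_comm, pow_mul]; norm_num
    rw [h4 _ (by positivity), h4 _ (by positivity), h9]; ring
  calc (2 * x + d) ^ (2 * N) ≤ (3 * y) ^ (2 * N) := by
        gcongr; linarith [le_max_left x d, le_max_right x d]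
    _ = 9 ^ N * (t ^ (4 * s)) ^ N := by rw [ht, mul_pow, pow_mul, pow_mul]; norm_num
    _ ≤ 9 ^ N * (((4 * s * h) ^ (4 * s)) ^ N * (N ! : ℝ) ^ (4 * s) * exp (t / h)) := by
        gcongr
        exact rpow_pow_le_factorial_rpow_mul_exp (by positivity) (by positivity) hh N
    _ ≤ _ := by
        rw [← mul_assoc, hsq, mul_assoc _ (exp _)]
        gcongr

lemma mul_sq_le_of_le_mul_exp_neg {x d a C s h : ℝ} (hx : 0 ≤ x) (hd : 0 ≤ d) (hs : 0 < s)
    (hh : 0 < h) (ha : 0 ≤ a) (haC : a ≤ C * exp (-(x ^ (1 / (2 * s)) / h))) (N : ℕ) :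
    (2 * x + d) ^ (2 * N) * a ^ 2 ≤
      (C * ((3 * (4 * s * h) ^ (2 * s)) ^ N * (N ! : ℝ) ^ (2 * s))) ^ 2
        * exp (d ^ (1 / (2 * s)) / h) * exp (-(x ^ (1 / (2 * s)) / h)) := by
  set u := x ^ (1 / (2 * s)) / h
  calc (2 * x + d) ^ (2 * N) * a ^ 2
      ≤ ((3 * (4 * s * h) ^ (2 * s)) ^ N * (N ! : ℝ) ^ (2 * s)) ^ 2
          * exp (d ^ (1 / (2 * s)) / h) * exp u * (C * exp (-u)) ^ 2 := by
        gcongr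
        exact two_mul_add_pow_le hx hd hs hh N
    _ = _ := by
        rw [exp_neg]; field_simp

lemma summable_prod_apply {β : Type*} (d : ℕ) {f : β → ℝ} (hf0 : 0 ≤ f) (hf : Summable f) :
    Summable fun α : Fin d → β => ∏ i, f (α i) := by
  induction d with
  | zero => exact .of_finite
  | succ n ih =>
    have hprod := hf.mul_of_nonneg ih hf0 fun α => Finset.prod_nonneg fun i _ => hf0 _
    refine (hprod.comp_injective (Fin.consEquiv fun _ => β).symm.injective).congr fun α => ?_
    simp [Fin.consEquiv, Fin.prod_univ_succ, Fin.tail]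

lemma summable_exp_neg_rpow_sum (d : ℕ) {s h : ℝ} (hs : 0 < s) (hh : 0 < h) :
    Summable fun α : Fin d → ℕ => exp (-((∑ i, (α i : ℝ)) ^ (1 / (2 * s)) / h)) := by
  set M := ((3 * (4 * s * h) ^ (2 * s)) ^ d * (d ! : ℝ) ^ (2 * s)) ^ 2
    * exp ((d : ℝ) ^ (1 / (2 * s)) / h)
  have hinv : Summable fun n : ℕ => 1 / ((n : ℝ) + 1) ^ 2 := by
    simpa using (Real.summable_one_div_nat_add_rpow 1 2).2 one_lt_two
  refine .of_nonneg_of_le (fun _ => (exp_pos _).le) (fun α => ?_)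
    ((summable_prod_apply d (fun _ => by positivity) hinv).mul_left M)
  set x := ∑ i, (α i : ℝ)
  have hx : 0 ≤ x := by positivity
  have hprod : ∏ i, ((α i : ℝ) + 1) ^ 2 ≤ (2 * x + d) ^ (2 * d) := by
    calc ∏ i, ((α i : ℝ) + 1) ^ 2 ≤ ∏ _i : Fin d, (2 * x + d) ^ 2 := by
          gcongr with i
          · have : (α i : ℝ) ≤ x :=
              Finset.single_le_sum (fun j _ => (α j).cast_nonneg) (Finset.mem_univ i)
            linarith
          · exact Nat.one_le_cast.2 i.pos
      _ = (2 * x + d) ^ (2 * d) := by simp [← pow_mul, mul_comm]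
  rw [Finset.prod_div_distrib, Finset.prod_const_one, mul_one_div, le_div_iff₀ (by positivity)]
  calc _ ≤ exp (-(x ^ (1 / (2 * s)) / h)) * (2 * x + d) ^ (2 * d) := by gcongr
    _ ≤ exp (-(x ^ (1 / (2 * s)) / h)) * (M * exp (x ^ (1 / (2 * s)) / h)) := by
        gcongr; exact two_mul_add_pow_le hx d.cast_nonneg hs hh d
    _ = M := by rw [mul_left_comm, ← exp_add, neg_add_cancel, exp_zero, mul_one]

theorem stmt_5 (d : ℕ) (C s h : ℝ) (hC : 0 < C) (hs : 0 < s) (hh : 0 < h)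
    (c : (Fin d → ℕ) → ℂ)
    (hc : ∀ α : Fin d → ℕ,
      ‖c α‖ ≤ C * Real.exp (-((∑ i, (α i : ℝ)) ^ (1 / (2 * s)) / h))) :
    ∃ C₁ > 0, ∀ N : ℕ,
      Real.sqrt (∑' α : Fin d → ℕ,
          (2 * (∑ i, (α i : ℝ)) + d) ^ (2 * N) * ‖c α‖ ^ 2)
        ≤ C₁ * (3 * (4 * s * h) ^ (2 * s)) ^ N * (Nat.factorial N : ℝ) ^ (2 * s) := by
  set w : (Fin d → ℕ) → ℝ := fun α => exp (-((∑ i, (α i : ℝ)) ^ (1 / (2 * s)) / h))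
  set E := exp ((d : ℝ) ^ (1 / (2 * s)) / h)
  have hw : Summable w := summable_exp_neg_rpow_sum d hs hh
  have hS : 0 < ∑' α, w α := hw.tsum_pos (fun _ => (exp_pos _).le) 0 (exp_pos _)
  refine ⟨C * √(E * ∑' α, w α), by positivity, fun N => ?_⟩
  set R := (3 * (4 * s * h) ^ (2 * s)) ^ N * (N ! : ℝ) ^ (2 * s)
  have hterm : ∀ α : Fin d → ℕ,
      (2 * (∑ i, (α i : ℝ)) + d) ^ (2 * N) * ‖c α‖ ^ 2 ≤ (C * R) ^ 2 * E * w α := fun α =>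
    mul_sq_le_of_le_mul_exp_neg (by positivity) d.cast_nonneg hs hh (norm_nonneg _) (hc α) N
  have hRw : Summable fun α => (C * R) ^ 2 * E * w α := hw.mul_left _
  rw [sqrt_le_left (by positivity)]
  calc _ ≤ ∑' α, (C * R) ^ 2 * E * w α :=
        (hRw.of_nonneg_of_le (fun α => by positivity) hterm).tsum_le_tsum hterm hRw
    _ = (C * R) ^ 2 * √(E * ∑' α, w α) ^ 2 := by
        rw [tsum_mul_left, sq_sqrt (by positivity)]; ring
    _ = _ := by ring
end

section
/- Let h₁, h₂ ∈ ℝ with 0 < 2h₁ ≤ h₂, s,t ≥ 1/2 (with h₂ < 1/2 if s = 1/2 or t = 1/2), M_{s,t}(x+iξ) = |x|^{1/t}+|ξ|^{1/s}, and let F ∈ L¹_loc(ℂ^d) satisfy ∫ |F(z)| e^{-|z|²+N|z|} dλ(z) < ∞ for all N. Define Π_A F(z) = π^{-d} ∫_{ℂ^d} F(w) e^{⟨z,w̄⟩} e^{-|w|²} dλ(w). Then ∫ |Π_A F(z)| e^{-(|z|²/2 + h₂ M_{s,t}(z))} dλ(z) ≤ C ∫ |F(z)| e^{-(|z|²/2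 + h₁ M_{s,t}(z))} dλ(z) for a constant C depending only on d, s, t, h₁, h₂. -/
/-!
With `M = M_{s,t}`, the modulus of the integrand of `Π_A F(z)` times the weight at `z` is
`|F w| exp(Re⟨z, w̄⟩ - |w|² - |z|²/2 - h₂ M z)`, and
`Re⟨z, w̄⟩ - |w|² - |z|²/2 = -|w|²/2 - |z - w|²/2`. As `1/t, 1/s ≤ 2` we have
`(a + b)^α ≤ 2 (a^α + b^α)`, so the triangle inequality gives `h₁ M w ≤ h₂ M z + h₂ M (z - w)`.
Hence the weighted `|Π_A F|` is at most `π^{-d}` times the convolution of the weighted `|F|` with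
`H u = exp(-|u|²/2 + h₂ M u)`, and Tonelli gives the estimate with `C = π^{-d} ∫ H`.
`H` is integrable because `h₂ r^α ≤ (1/2 - ε) r² + K`, which for `α = 2` is where `h₂ < 1/2` enters.
-/

open MeasureTheory Filter
open scoped ENNReal

theorem Real.rpow_add_le_two_mul_add {a x y : ℝ} (ha₀ : 0 ≤ a) (ha₂ : a ≤ 2) (hx : 0 ≤ x)
    (hy : 0 ≤ y) : (x + y) ^ a ≤ 2 * (x ^ a + y ^ a) := by
  rcases le_total a 1 with ha₁ | ha₁
  · have := Real.rpow_add_le_add_rpow hx hy ha₀ ha₁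
    nlinarith [Real.rpow_nonneg hx a, Real.rpow_nonneg hy a]
  · lift x to NNReal using hx
    lift y to NNReal using hy
    have h := NNReal.rpow_add_le_mul_rpow_add_rpow x y ha₁
    have h2 : (2 : NNReal) ^ (a - 1) ≤ 2 := by
      simpa using NNReal.rpow_le_rpow_of_exponent_le (by norm_num : (1 : NNReal) ≤ 2)
        (by linarith : a - 1 ≤ 1)
    exact_mod_cast h.trans (mul_le_mul_of_nonneg_right h2 (by positivity))

theorem Real.mul_rpow_le_of_le_add {a c₁ c₂ x y u : ℝ} (ha₀ : 0 ≤ a) (ha₂ : a ≤ 2)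
    (hc : 2 * c₁ ≤ c₂) (hc₁ : 0 ≤ c₁) (hx : 0 ≤ x) (hy : 0 ≤ y) (hu : 0 ≤ u)
    (hxyu : x ≤ y + u) : c₁ * x ^ a ≤ c₂ * y ^ a + c₂ * u ^ a := by
  have h₁ : x ^ a ≤ (y + u) ^ a := Real.rpow_le_rpow hx hxyu ha₀
  have h₂ := Real.rpow_add_le_two_mul_add ha₀ ha₂ hy hu
  nlinarith [Real.rpow_nonneg hy a, Real.rpow_nonneg hu a]

theorem Real.exists_mul_rpow_le_sq_div_four_add {a c : ℝ} (ha₀ : 0 ≤ a) (ha₂ : a < 2)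
    (hc : 0 ≤ c) : ∃ K, ∀ r, 0 ≤ r → c * r ^ a ≤ r ^ 2 / 4 + K := by
  obtain ⟨R, hR⟩ := eventually_atTop.1
    ((tendsto_rpow_atTop (sub_pos.2 ha₂)).eventually_ge_atTop (4 * c))
  refine ⟨c * |R| ^ a, fun r hr => ?_⟩
  rcases le_total r |R| with hrR | hRr
  · nlinarith [Real.rpow_le_rpow hr hrR ha₀, sq_nonneg r]
  · have hsplit : r ^ 2 = r ^ a * r ^ (2 - a) := by
      rw [← Real.rpow_natCast, ← Real.rpow_add' hr (by norm_num)]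
      norm_num
    nlinarith [hR r ((le_abs_self R).trans hRr), Real.rpow_nonneg hr a,
      Real.rpow_nonneg (abs_nonneg R) a]

theorem Real.exists_mul_rpow_le_of_lt_half {a c : ℝ} (ha₀ : 0 ≤ a) (ha₂ : a ≤ 2) (hc : 0 ≤ c)
    (hc₂ : a = 2 → c < 1 / 2) :
    ∃ ε > 0, ∃ K, ∀ r, 0 ≤ r → c * r ^ a ≤ (1 / 2 - ε) * r ^ 2 + K := by
  rcases ha₂.eq_or_lt with rfl | ha₂
  · refine ⟨(1 / 2 - c) / 2, by linarith [hc₂ rfl], 0, fun r _ => ?_⟩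
    rw [Real.rpow_two]
    nlinarith [hc₂ rfl, sq_nonneg r]
  · obtain ⟨K, hK⟩ := Real.exists_mul_rpow_le_sq_div_four_add ha₀ ha₂ hc
    exact ⟨1 / 4, by norm_num, K, fun r hr => by linarith [hK r hr]⟩

theorem MeasureTheory.lintegral_lconvolution {G : Type*} [MeasurableSpace G] [AddGroup G]
    [MeasurableAdd₂ G] [MeasurableNeg G] {μ : Measure G} [μ.IsAddLeftInvariant] [SFinite μ]
    {f g : G → ℝ≥0∞} (hf : AEMeasurable f μ) (hg : AEMeasurable g μ) :
    ∫⁻ x, (f ⋆ₗ[μ] g) x ∂μ = (∫⁻ x, f x ∂μ) * ∫⁻ x, g x ∂μ := by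
  simp only [lconvolution_def]
  rw [lintegral_lintegral_swap (by fun_prop), ← lintegral_mul_const'' _ hf]
  refine lintegral_congr fun y => ?_
  rw [lintegral_add_left_eq_self (fun x => f y * g x) (-y), lintegral_const_mul'' _ hg]

theorem aemeasurable_of_aemeasurable_mul_exp {α : Type*} [MeasurableSpace α] {μ : Measure α}
    {f φ : α → ℝ} (h : AEMeasurable (fun x => f x * Real.exp (φ x)) μ) (hφ : Measurable φ) :
    AEMeasurable f μ := by
  refine (h.mul (hφ.neg.exp.aemeasurable)).congr (ae_of_all _ fun x => ?_)
  simp [mul_assoc, ← Real.exp_add]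

noncomputable section

namespace Bargmann

variable {d : ℕ}

def sqNorm (z : Fin d → ℂ) : ℝ := ∑ i, ‖z i‖ ^ 2

def euclidNorm (x : Fin d → ℝ) : ℝ := √(∑ i, x i ^ 2)

/-- `M_{s,t}` of the paper is `weight (1 / t) (1 / s)`. -/
def weight (p q : ℝ) (z : Fin d → ℂ) : ℝ :=
  euclidNorm (fun i => (z i).re) ^ p + euclidNorm (fun i => (z i).im) ^ q

def bargmann (F : (Fin d → ℂ) → ℂ) (z : Fin d → ℂ) : ℂ :=
  (Real.pi : ℂ)⁻¹ ^ d *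
    ∫ w, F w * Complex.exp (∑ i, z i * (starRingEnd ℂ) (w i)) * ((Real.exp (-sqNorm w) : ℝ) : ℂ)

def weightedNorm (F : (Fin d → ℂ) → ℂ) (c p q : ℝ) (z : Fin d → ℂ) : ℝ≥0∞ :=
  ENNReal.ofReal (‖F z‖ * Real.exp (-(sqNorm z / 2 + c * weight p q z)))

def kernel (c p q : ℝ) (u : Fin d → ℂ) : ℝ≥0∞ :=
  ENNReal.ofReal (Real.exp (-sqNorm u / 2 + c * weight p q u))

theorem euclidNorm_eq_norm (x : Fin d → ℝ) :
    euclidNorm x = ‖(WithLp.toLp 2 x : EuclideanSpace ℝ (Fin d))‖ := by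
  simp [euclidNorm, EuclideanSpace.norm_eq]

theorem euclidNorm_le_add_sub (x y : Fin d → ℝ) :
    euclidNorm y ≤ euclidNorm x + euclidNorm (x - y) := by
  simpa only [euclidNorm_eq_norm, WithLp.toLp_sub] using norm_le_norm_add_norm_sub _ _

theorem sqNorm_eq (z : Fin d → ℂ) :
    sqNorm z = euclidNorm (fun i => (z i).re) ^ 2 + euclidNorm (fun i => (z i).im) ^ 2 := by
  rw [sqNorm, euclidNorm, euclidNorm, Real.sq_sqrt (by positivity), Real.sq_sqrt (by positivity),
    ← Finset.sum_add_distrib]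
  refine Finset.sum_congr rfl fun i _ => ?_
  rw [Complex.sq_norm, Complex.normSq_apply]
  ring

theorem re_sum_mul_conj_sub_sqNorm (z w : Fin d → ℂ) :
    (∑ i, z i * (starRingEnd ℂ) (w i)).re - sqNorm w - sqNorm z / 2
      = -sqNorm w / 2 - sqNorm (z - w) / 2 := by
  simp only [sqNorm, Complex.re_sum, Finset.sum_div, ← Finset.sum_sub_distrib, neg_div,
    ← Finset.sum_neg_distrib]
  refine Finset.sum_congr rfl fun i _ => ?_
  simp only [Pi.sub_apply, Complex.sq_norm, Complex.normSq_apply, Complex.sub_re, Complex.sub_im,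
    Complex.mul_re, Complex.conj_re, Complex.conj_im]
  ring

theorem mul_weight_le_add {c₁ c₂ p q : ℝ} (hp₀ : 0 ≤ p) (hp₂ : p ≤ 2) (hq₀ : 0 ≤ q) (hq₂ : q ≤ 2)
    (hc : 2 * c₁ ≤ c₂) (hc₁ : 0 ≤ c₁) (z w : Fin d → ℂ) :
    c₁ * weight p q w ≤ c₂ * weight p q z + c₂ * weight p q (z - w) := by
  have hre : c₁ * euclidNorm (fun i => (w i).re) ^ p ≤ c₂ * euclidNorm (fun i => (z i).re) ^ p
      + c₂ * euclidNorm (fun i => ((z - w) i).re) ^ p :=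
    Real.mul_rpow_le_of_le_add hp₀ hp₂ hc hc₁ (Real.sqrt_nonneg _) (Real.sqrt_nonneg _)
      (Real.sqrt_nonneg _) (euclidNorm_le_add_sub _ _)
  have him : c₁ * euclidNorm (fun i => (w i).im) ^ q ≤ c₂ * euclidNorm (fun i => (z i).im) ^ q
      + c₂ * euclidNorm (fun i => ((z - w) i).im) ^ q :=
    Real.mul_rpow_le_of_le_add hq₀ hq₂ hc hc₁ (Real.sqrt_nonneg _) (Real.sqrt_nonneg _)
      (Real.sqrt_nonneg _) (euclidNorm_le_add_sub _ _)
  simp only [weight]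
  linarith

theorem integrable_exp_neg_mul_sqNorm {ε : ℝ} (hε : 0 < ε) :
    Integrable (fun u : Fin d → ℂ => Real.exp (-ε * sqNorm u)) := by
  have h₁ : Integrable (fun v : ℂ => Real.exp (-ε * ‖v‖ ^ 2)) := by
    refine (GaussianFourier.integrable_cexp_neg_mul_sq_norm_add
      (b := ε) (by simpa using hε) 0 (0 : ℂ)).norm.congr (ae_of_all _ fun v => ?_)
    simp [Complex.norm_exp, ← Complex.ofReal_pow]
  refine (Integrable.fintype_prod (fun (_ : Fin d) => h₁)).congr (ae_of_all _ fun u => ?_)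
  simp only [sqNorm, Finset.mul_sum, Real.exp_sum]

theorem exists_neg_sqNorm_div_two_add_mul_weight_le {c p q : ℝ} (hp₀ : 0 ≤ p) (hp₂ : p ≤ 2)
    (hq₀ : 0 ≤ q) (hq₂ : q ≤ 2) (hc : 0 ≤ c) (hcp : p = 2 → c < 1 / 2)
    (hcq : q = 2 → c < 1 / 2) :
    ∃ ε > 0, ∃ K, ∀ u : Fin d → ℂ, -sqNorm u / 2 + c * weight p q u ≤ K - ε * sqNorm u := by
  obtain ⟨ε₁, hε₁, K₁, hK₁⟩ := Real.exists_mul_rpow_le_of_lt_half hp₀ hp₂ hc hcp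
  obtain ⟨ε₂, hε₂, K₂, hK₂⟩ := Real.exists_mul_rpow_le_of_lt_half hq₀ hq₂ hc hcq
  refine ⟨min ε₁ ε₂, lt_min hε₁ hε₂, K₁ + K₂, fun u => ?_⟩
  set x := euclidNorm fun i => (u i).re
  set y := euclidNorm fun i => (u i).im
  have hx := hK₁ x (Real.sqrt_nonneg _)
  have hy := hK₂ y (Real.sqrt_nonneg _)
  rw [sqNorm_eq, weight]
  nlinarith [mul_le_mul_of_nonneg_right (min_le_left ε₁ ε₂) (sq_nonneg x),
    mul_le_mul_of_nonneg_right (min_le_right ε₁ ε₂) (sq_nonneg y)]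

theorem measurable_kernel (c p q : ℝ) : Measurable (kernel (d := d) c p q) := by
  unfold kernel weight euclidNorm sqNorm
  fun_prop

theorem lintegral_kernel_lt_top {c p q : ℝ} (hp₀ : 0 ≤ p) (hp₂ : p ≤ 2) (hq₀ : 0 ≤ q)
    (hq₂ : q ≤ 2) (hc : 0 ≤ c) (hcp : p = 2 → c < 1 / 2) (hcq : q = 2 → c < 1 / 2) :
    ∫⁻ u : Fin d → ℂ, kernel c p q u < ∞ := by
  obtain ⟨ε, hε, K, hK⟩ := exists_neg_sqNorm_div_two_add_mul_weight_le hp₀ hp₂ hq₀ hq₂ hc hcp hcq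
  refine lt_of_le_of_lt (lintegral_mono fun u => ENNReal.ofReal_le_ofReal ?_)
    ((integrable_exp_neg_mul_sqNorm hε).const_mul (Real.exp K)).lintegral_lt_top
  rw [← Real.exp_add]
  exact Real.exp_le_exp.2 (by linarith [hK u])

theorem ofReal_norm_integral_le (F : (Fin d → ℂ) → ℂ) (z : Fin d → ℂ) :
    ENNReal.ofReal ‖∫ w, F w * Complex.exp (∑ i, z i * (starRingEnd ℂ) (w i)) *
        ((Real.exp (-sqNorm w) : ℝ) : ℂ)‖
      ≤ ∫⁻ w, ENNReal.ofReal
          (‖F w‖ * Real.exp ((∑ i, z i * (starRingEnd ℂ) (w i)).re - sqNorm w)) := by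
  rw [ofReal_norm]
  refine (enorm_integral_le_lintegral_enorm _).trans_eq (lintegral_congr fun w => ?_)
  rw [← ofReal_norm, norm_mul, norm_mul, Complex.norm_exp, Complex.norm_real,
    Real.norm_of_nonneg (Real.exp_pos _).le, mul_assoc, ← Real.exp_add, sub_eq_add_neg]

theorem weightedNorm_bargmann_le {h₁ h₂ p q : ℝ} (hp₀ : 0 ≤ p) (hp₂ : p ≤ 2) (hq₀ : 0 ≤ q)
    (hq₂ : q ≤ 2) (hh₁ : 0 ≤ h₁) (hh₁₂ : 2 * h₁ ≤ h₂) (F : (Fin d → ℂ) → ℂ) (z : Fin d → ℂ) :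
    weightedNorm (bargmann F) h₂ p q z
      ≤ ENNReal.ofReal (Real.pi⁻¹ ^ d) * (weightedNorm F h₁ p q ⋆ₗ kernel h₂ p q) z := by
  have hexp : ∀ w, (∑ i, z i * (starRingEnd ℂ) (w i)).re - sqNorm w
      - (sqNorm z / 2 + h₂ * weight p q z)
      ≤ -(sqNorm w / 2 + h₁ * weight p q w) + (-sqNorm (-w + z) / 2 + h₂ * weight p q (-w + z)) := by
    intro w
    rw [neg_add_eq_sub w z]
    linarith [re_sum_mul_conj_sub_sqNorm z w, mul_weight_le_add hp₀ hp₂ hq₀ hq₂ hh₁₂ hh₁ z w]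
  have hpi : ‖(Real.pi : ℂ)⁻¹ ^ d‖ = Real.pi⁻¹ ^ d := by
    rw [norm_pow, norm_inv, Complex.norm_real, Real.norm_of_nonneg Real.pi_pos.le]
  rw [weightedNorm, bargmann, norm_mul, hpi, mul_assoc, ENNReal.ofReal_mul (by positivity),
    ENNReal.ofReal_mul (norm_nonneg _)]
  gcongr
  calc _ ≤ (∫⁻ w, ENNReal.ofReal
          (‖F w‖ * Real.exp ((∑ i, z i * (starRingEnd ℂ) (w i)).re - sqNorm w))) *
        ENNReal.ofReal (Real.exp (-(sqNorm z / 2 + h₂ * weight p q z))) := by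
        gcongr
        exact ofReal_norm_integral_le F z
    _ = ∫⁻ w, ENNReal.ofReal
          (‖F w‖ * Real.exp ((∑ i, z i * (starRingEnd ℂ) (w i)).re - sqNorm w)) *
        ENNReal.ofReal (Real.exp (-(sqNorm z / 2 + h₂ * weight p q z))) :=
      (lintegral_mul_const' _ _ ENNReal.ofReal_ne_top).symm
    _ ≤ _ := by
      rw [lconvolution_def]
      refine lintegral_mono fun w => ?_
      rw [weightedNorm, kernel, ← ENNReal.ofReal_mul (by positivity),
        ← ENNReal.ofReal_mul (by positivity), mul_assoc, mul_assoc, ← Real.exp_add,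
        ← Real.exp_add]
      gcongr ENNReal.ofReal (_ * Real.exp ?_)
      linarith [hexp w]

theorem lintegral_weightedNorm_bargmann_le {h₁ h₂ p q : ℝ} (hp₀ : 0 ≤ p) (hp₂ : p ≤ 2)
    (hq₀ : 0 ≤ q) (hq₂ : q ≤ 2) (hh₁ : 0 ≤ h₁) (hh₁₂ : 2 * h₁ ≤ h₂) {F : (Fin d → ℂ) → ℂ}
    (hF : AEMeasurable (fun w => ‖F w‖)) :
    ∫⁻ z, weightedNorm (bargmann F) h₂ p q z
      ≤ ENNReal.ofReal (Real.pi⁻¹ ^ d) * (∫⁻ u : Fin d → ℂ, kernel h₂ p q u) *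
          ∫⁻ z, weightedNorm F h₁ p q z := by
  have hFw : AEMeasurable (weightedNorm F h₁ p q) := by
    unfold weightedNorm weight euclidNorm sqNorm
    fun_prop
  calc _ ≤ ∫⁻ z, ENNReal.ofReal (Real.pi⁻¹ ^ d) * (weightedNorm F h₁ p q ⋆ₗ kernel h₂ p q) z :=
        lintegral_mono (weightedNorm_bargmann_le hp₀ hp₂ hq₀ hq₂ hh₁ hh₁₂ F)
    _ = _ := by
      rw [lintegral_const_mul' _ _ ENNReal.ofReal_ne_top,
        lintegral_lconvolution hFw (measurable_kernel h₂ p q).aemeasurable]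
      ring

end Bargmann

end

theorem stmt_16 (d : ℕ) (s t h₁ h₂ : ℝ) (hs : 1 / 2 ≤ s) (ht : 1 / 2 ≤ t)
    (hh₁ : 0 < h₁) (hh₁₂ : 2 * h₁ ≤ h₂)
    (h2s : s = 1 / 2 → h₂ < 1 / 2) (h2t : t = 1 / 2 → h₂ < 1 / 2) :
    ∃ C > 0, ∀ F : (Fin d → ℂ) → ℂ,
      (∀ N : ℕ, Integrable (fun z : Fin d → ℂ =>
        ‖F z‖ *
          Real.exp (-(∑ i, ‖z i‖ ^ 2) +
            N * Real.sqrt (∑ i, ‖z i‖ ^ 2)))) →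
      (∫⁻ z : Fin d → ℂ,
          ENNReal.ofReal
            (‖((Real.pi : ℂ)⁻¹ ^ d *
                ∫ w : Fin d → ℂ,
                  F w * Complex.exp (∑ i, z i * (starRingEnd ℂ) (w i)) *
                    ((Real.exp (-(∑ i, ‖w i‖ ^ 2)) : ℝ) : ℂ))‖ *
              Real.exp (-((∑ i, ‖z i‖ ^ 2) / 2 +
                h₂ * ((Real.sqrt (∑ i, (z i).re ^ 2)) ^ (1 / t) +
                  (Real.sqrt (∑ i, (z i).im ^ 2)) ^ (1 / s))))))
        ≤ ENNReal.ofReal C *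
            ∫⁻ z : Fin d → ℂ,
              ENNReal.ofReal
                (‖F z‖ *
                  Real.exp (-((∑ i, ‖z i‖ ^ 2) / 2 +
                    h₁ * ((Real.sqrt (∑ i, (z i).re ^ 2)) ^ (1 / t) +
                      (Real.sqrt (∑ i, (z i).im ^ 2)) ^ (1 / s))))) := by
  have hp : 0 ≤ 1 / t ∧ 1 / t ≤ 2 := ⟨by positivity, by rw [div_le_iff₀ (by linarith)]; linarith⟩
  have hq : 0 ≤ 1 / s ∧ 1 / s ≤ 2 := ⟨by positivity, by rw [div_le_iff₀ (by linarith)]; linarith⟩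
  have hK : ∫⁻ u : Fin d → ℂ, Bargmann.kernel h₂ (1 / t) (1 / s) u < ∞ :=
    Bargmann.lintegral_kernel_lt_top hp.1 hp.2 hq.1 hq.2 (by linarith)
      (fun h => h2t (by field_simp at h; linarith)) (fun h => h2s (by field_simp at h; linarith))
  refine ⟨Real.pi⁻¹ ^ d * (∫⁻ u : Fin d → ℂ, Bargmann.kernel h₂ (1 / t) (1 / s) u).toReal + 1,
    by positivity, fun F hF => ?_⟩
  have hFm : AEMeasurable fun w => ‖F w‖ :=
    aemeasurable_of_aemeasurable_mul_exp (hF 0).aemeasurable (by fun_prop)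
  show ∫⁻ z, Bargmann.weightedNorm (Bargmann.bargmann F) h₂ (1 / t) (1 / s) z
    ≤ ENNReal.ofReal _ * ∫⁻ z, Bargmann.weightedNorm F h₁ (1 / t) (1 / s) z
  refine (Bargmann.lintegral_weightedNorm_bargmann_le hp.1 hp.2 hq.1 hq.2 hh₁.le hh₁₂ hFm).trans ?_
  gcongr ?_ * _
  conv_lhs => rw [← ENNReal.ofReal_toReal hK.ne, ← ENNReal.ofReal_mul (by positivity)]
  exact ENNReal.ofReal_le_ofReal (le_add_of_nonneg_right zero_le_one)
end
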